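/- arXiv:2602.09884 — 3 statements merged into one kernel-verified Lean document; each statement's English description precedes it below -/
import Mathlib

section
/- Let G be a simple graph with n ≥ 2 vertices and m edges, and r⃗ = (2,1,…,1) ∈ ℤⁿ. The number of 1-cells of S_{r⃗}(G) equals m(n−1)!(n² + n − 4)/2. -/
/-- Two elements of `V(G) ∪ E(G)` overlap if their point sets (a vertex, or a
closed edge together with its endpoints) intersect. -/
def overlap {V : Type*} : V ⊕ Sym2 V → V ⊕ Sym2 V → Prop
  | .inl v, .inl w => v = w
  | .inl v, .inr e => v ∈ e
  | .inr e, .inl v => v ∈ e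
  | .inr e, .inr f => ∃ v, v ∈ e ∧ v ∈ f

/-- A cell of the grouped Stirling complex `S_{r⃗}(G)`: an `r`-tuple of sets of
vertices and edges of `G`, with prescribed cardinalities `ℓ i`, covering every
vertex, and pairwise disjoint within each color. -/
def IsCell {V : Type*} [DecidableEq V] (G : SimpleGraph V) {r : ℕ} (ℓ : Fin r → ℕ)
    (c : Fin r → Finset (V ⊕ Sym2 V)) : Prop :=
  (∀ i, (c i).card = ℓ i) ∧
  (∀ i, ∀ e : Sym2 V, Sum.inr e ∈ c i → e ∈ G.edgeSet) ∧
  (∀ v : V, ∃ i, Sum.inl v ∈ c i) ∧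
  (∀ i, ∀ x ∈ c i, ∀ y ∈ c i, x ≠ y → ¬ overlap x y)

/-- The dimension of a cell: the total number of edges appearing among the
components, counted with multiplicity over the colors. -/
def cellDim {V : Type*} {r : ℕ} (c : Fin r → Finset (V ⊕ Sym2 V)) : ℕ :=
  ∑ i, ((c i).filter (fun x => x.isRight)).card

open Finset

namespace CountAux

variable {V : Type*} [Fintype V] [DecidableEq V]

def Q {n : ℕ} (z : Fin n) (e : Sym2 V) (F : V ⊕ Unit → Fin n) : Prop :=
  Function.Surjective F ∧ (∀ x y, F x = F y → x = y ∨ F x = z) ∧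
    ∀ v ∈ e, F (.inl v) ≠ F (.inr ())

lemma fiber_card {n : ℕ} {B : Type*} [Fintype B] [DecidableEq B]
    (hB : Fintype.card B = n + 1) (z : Fin n) (F : B → Fin n)
    (hs : Function.Surjective F) (hcol : ∀ x y, F x = F y → x = y ∨ F x = z) :
    (univ.filter fun x => F x = z).card = 2 ∧
      ∀ j : Fin n, j ≠ z → (univ.filter fun x => F x = j).card = 1 := by
  have h1 : ∀ j : Fin n, j ≠ z → (univ.filter fun x => F x = j).card = 1 := by
    intro j hj
    obtain ⟨x, hx⟩ := hs j
    apply le_antisymm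
    · apply Finset.card_le_one.2
      intro a ha b hb
      simp only [mem_filter, mem_univ, true_and] at ha hb
      rcases hcol a b (ha.trans hb.symm) with h | h
      · exact h
      · exact absurd (ha.symm.trans h) hj
    · exact Finset.card_pos.2 ⟨x, by simp [hx]⟩
  refine ⟨?_, h1⟩
  have hsum := Finset.card_eq_sum_card_fiberwise (f := F) (s := univ) (t := univ)
    (fun x _ => mem_univ _)
  rw [card_univ, hB] at hsum
  rw [← Finset.add_sum_erase _ _ (mem_univ z)] at hsum
  have hrest : ∑ j ∈ univ.erase z, (univ.filter fun x => F x = j).card = n - 1 := by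
    rw [Finset.sum_congr rfl (fun j hj => h1 j (Finset.mem_erase.1 hj).1)]
    simp [Finset.card_erase_of_mem]
  have hpos : 0 < n := z.pos
  omega

lemma card_filter_sum {α β : Type*} [Fintype α] [Fintype β] [DecidableEq α] [DecidableEq β]
    (p : α ⊕ β → Prop) [DecidablePred p] :
    (univ.filter p).card =
      (univ.filter fun a => p (.inl a)).card + (univ.filter fun b => p (.inr b)).card := by
  have h : (univ : Finset (α ⊕ β)) =
      (univ.map ⟨Sum.inl, Sum.inl_injective⟩) ∪ (univ.map ⟨Sum.inr, Sum.inr_injective⟩) := by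
    ext x; cases x <;> simp
  rw [h, filter_union, card_union_of_disjoint, filter_map, filter_map, card_map, card_map]
  · rfl
  · simp [Finset.disjoint_left]


def recon {n : ℕ} (e : Sym2 V) (F : V ⊕ Unit → Fin n) (i : Fin n) : Finset (V ⊕ Sym2 V) :=
  ((univ.filter fun v => F (.inl v) = i).image Sum.inl) ∪
    (if F (.inr ()) = i then {Sum.inr e} else ∅)

lemma mem_recon_inl {n : ℕ} {e : Sym2 V} {F : V ⊕ Unit → Fin n} {i : Fin n} {v : V} :
    Sum.inl v ∈ recon e F i ↔ F (.inl v) = i := by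
  by_cases hF : F (.inr ()) = i <;> simp [recon, hF]

lemma mem_recon_inr {n : ℕ} {e : Sym2 V} {F : V ⊕ Unit → Fin n} {i : Fin n} {f : Sym2 V} :
    Sum.inr f ∈ recon e F i ↔ f = e ∧ F (.inr ()) = i := by
  by_cases hF : F (.inr ()) = i <;> simp [recon, hF]

lemma card_recon {n : ℕ} (hcard : Fintype.card V = n) (z : Fin n) (e : Sym2 V)
    (F : V ⊕ Unit → Fin n) (hQ : Q z e F) (i : Fin n) :
    (recon e F i).card = if i = z then 2 else 1 := by
  have hB : Fintype.card (V ⊕ Unit) = n + 1 := by simp [hcard]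
  have hfib := fiber_card hB z F hQ.1 hQ.2.1
  have h1 : (recon e F i).card =
      (univ.filter fun v => F (.inl v) = i).card + (if F (.inr ()) = i then 1 else 0) := by
    unfold recon
    rw [card_union_of_disjoint]
    · rw [card_image_of_injective _ Sum.inl_injective]
      congr 1
      split <;> simp
    · split <;> simp [disjoint_left]
  have h2 := card_filter_sum (β := Unit) (fun x => F x = i)
  have h3 : (univ.filter fun u : Unit => F (.inr u) = i).card =
      if F (.inr ()) = i then 1 else 0 := by
    by_cases hF : F (.inr ()) = i
    · rw [Finset.filter_true_of_mem fun u _ => by cases u; exact hF]; simp [hF]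
    · rw [Finset.filter_false_of_mem fun u _ => by cases u; exact hF]; simp [hF]
  rw [h1, ← h3, ← h2]
  by_cases hiz : i = z
  · subst hiz; simp [hfib.1]
  · simp [hiz, hfib.2 i hiz]

lemma recon_cell {n : ℕ} {G : SimpleGraph V} (hcard : Fintype.card V = n) (z : Fin n)
    (e : Sym2 V) (F : V ⊕ Unit → Fin n) (he : e ∈ G.edgeSet) (hQ : Q z e F) :
    IsCell G (fun k => if k = z then 2 else 1) (recon e F) ∧ cellDim (recon e F) = 1 := by
  refine ⟨⟨fun i => card_recon hcard z e F hQ i, ?_, ?_, ?_⟩, ?_⟩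
  · intro i f hf
    rcases mem_recon_inr.1 hf with ⟨rfl, _⟩
    exact he
  · intro v
    exact ⟨F (.inl v), mem_recon_inl.2 rfl⟩
  · intro i x hx y hy hxy hov
    cases x with
    | inl v =>
      cases y with
      | inl w =>
        exact hxy (by rw [show v = w from hov])
      | inr f =>
        rcases mem_recon_inr.1 hy with ⟨rfl, hFe⟩
        exact hQ.2.2 v hov ((mem_recon_inl.1 hx).trans hFe.symm)
    | inr f =>
      rcases mem_recon_inr.1 hx with ⟨rfl, hFe⟩
      cases y with
      | inl w =>
        exact hQ.2.2 w hov ((mem_recon_inl.1 hy).trans hFe.symm)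
      | inr g =>
        rcases mem_recon_inr.1 hy with ⟨rfl, _⟩
        exact hxy rfl
  · unfold cellDim
    have hfil : ∀ i, ((recon e F i).filter fun x => x.isRight) =
        if F (.inr ()) = i then {Sum.inr e} else ∅ := by
      intro i
      ext x
      cases x with
      | inl v => split <;> simp
      | inr f =>
        rw [mem_filter, mem_recon_inr]
        by_cases hF : F (.inr ()) = i <;> simp [hF]
    have hcardif : ∀ i : Fin n,
        #(if F (.inr ()) = i then ({Sum.inr e} : Finset (V ⊕ Sym2 V)) else ∅) =
          if F (.inr ()) = i then 1 else 0 := fun i => by split <;> simp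
    simp only [hfil, hcardif]
    rw [Finset.sum_ite_eq univ (F (.inr ())) fun _ => 1]
    simp


lemma exists_repr {n : ℕ} {G : SimpleGraph V} (hcard : Fintype.card V = n) (z : Fin n)
    (c : Fin n → Finset (V ⊕ Sym2 V))
    (hc1 : ∀ i, (c i).card = if i = z then 2 else 1)
    (hc2 : ∀ i, ∀ e : Sym2 V, Sum.inr e ∈ c i → e ∈ G.edgeSet)
    (hc3 : ∀ v : V, ∃ i, Sum.inl v ∈ c i)
    (hc4 : ∀ i, ∀ x ∈ c i, ∀ y ∈ c i, x ≠ y → ¬ overlap x y)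
    (hdim : cellDim c = 1) :
    ∃ e F, e ∈ G.edgeSet ∧ Q z e F ∧ recon e F = c := by
  have hsum : ∑ i, (c i).card = n + 1 := by
    simp only [hc1]
    have hsplit : ∀ i : Fin n, (if i = z then 2 else 1) = (if i = z then 1 else 0) + 1 :=
      fun i => by split <;> rfl
    simp only [hsplit]
    rw [Finset.sum_add_distrib, Finset.sum_ite_eq' univ z fun _ => 1]
    simp
    omega
  -- the unique edge
  obtain ⟨p₀, hp₀⟩ := Finset.card_eq_one.1
    (show (univ.sigma fun i => (c i).filter fun x => x.isRight).card = 1 by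
      rw [Finset.card_sigma]; exact hdim)
  obtain ⟨i₀, x₀⟩ := p₀
  have hx₀ : x₀ ∈ (c i₀).filter fun x => x.isRight := by
    have : (⟨i₀, x₀⟩ : Σ _ : Fin n, V ⊕ Sym2 V) ∈
        univ.sigma fun i => (c i).filter fun x => x.isRight := by
      rw [hp₀]; exact mem_singleton_self _
    exact (mem_sigma.1 this).2
  obtain v' | e₀ := x₀
  · exact absurd (mem_filter.1 hx₀).2 (by simp)
  have hedge_mem : Sum.inr e₀ ∈ c i₀ := (mem_filter.1 hx₀).1
  have huniq : ∀ j f, Sum.inr f ∈ c j → j = i₀ ∧ f = e₀ := by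
    intro j f hf
    have hmem : (⟨j, Sum.inr f⟩ : Σ _ : Fin n, V ⊕ Sym2 V) ∈
        univ.sigma fun i => (c i).filter fun x => x.isRight :=
      mem_sigma.2 ⟨mem_univ _, mem_filter.2 ⟨hf, rfl⟩⟩
    rw [hp₀, mem_singleton] at hmem
    obtain ⟨h1, h2⟩ := Sigma.mk.inj_iff.1 hmem
    exact ⟨h1, Sum.inr.inj (eq_of_heq h2)⟩
  -- vertex uniqueness
  have hfil_split : ∀ i, #((c i).filter fun x => x.isLeft) + #((c i).filter fun x => x.isRight)
      = (c i).card := by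
    intro i
    have hkey := Finset.card_filter_add_card_filter_not (s := c i)
      (p := fun x : V ⊕ Sym2 V => x.isLeft)
    rw [show (c i).filter (fun a => ¬ a.isLeft) = (c i).filter (fun x => x.isRight) from
      Finset.filter_congr (fun x _ => by cases x <;> simp)] at hkey
    exact hkey
  have hvsum : ∑ i, #((c i).filter fun x => x.isLeft) = n := by
    have e1 : ∑ i, (#((c i).filter fun x => x.isLeft) + #((c i).filter fun x => x.isRight))
        = n + 1 := by rw [Finset.sum_congr rfl fun i _ => hfil_split i]; exact hsum
    rw [Finset.sum_add_distrib] at e1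
    unfold cellDim at hdim
    omega
  have hL : (univ.sigma fun i => (c i).filter fun x => x.isLeft).card = n := by
    rw [Finset.card_sigma]; exact hvsum
  have hVne : Nonempty V := by
    rw [← Fintype.card_pos_iff, hcard]; exact z.pos
  obtain ⟨v₀⟩ := hVne
  set g : (Σ _ : Fin n, V ⊕ Sym2 V) → V := fun p => p.2.elim id fun _ => v₀ with hg
  have himg : (univ.sigma fun i => (c i).filter fun x => x.isLeft).image g = univ := by
    apply Finset.eq_univ_iff_forall.2
    intro v
    obtain ⟨i, hi⟩ := hc3 v
    exact Finset.mem_image.2 ⟨⟨i, Sum.inl v⟩,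
      mem_sigma.2 ⟨mem_univ _, mem_filter.2 ⟨hi, rfl⟩⟩, rfl⟩
  have hinj : Set.InjOn g (univ.sigma fun i => (c i).filter fun x => x.isLeft) :=
    Finset.card_image_iff.1 (by rw [himg, card_univ, hcard, hL])
  have hv : ∀ v : V, ∃! i, Sum.inl v ∈ c i := by
    intro v
    obtain ⟨i, hi⟩ := hc3 v
    refine ⟨i, hi, ?_⟩
    intro j hj
    have h1 : (⟨j, Sum.inl v⟩ : Σ _ : Fin n, V ⊕ Sym2 V) ∈
        univ.sigma fun i => (c i).filter fun x => x.isLeft :=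
      mem_sigma.2 ⟨mem_univ _, mem_filter.2 ⟨hj, rfl⟩⟩
    have h2 : (⟨i, Sum.inl v⟩ : Σ _ : Fin n, V ⊕ Sym2 V) ∈
        univ.sigma fun i => (c i).filter fun x => x.isLeft :=
      mem_sigma.2 ⟨mem_univ _, mem_filter.2 ⟨hi, rfl⟩⟩
    exact congrArg Sigma.fst (hinj h1 h2 rfl)
  set F : V ⊕ Unit → Fin n := Sum.elim (fun v => (hv v).choose) (fun _ => i₀) with hF
  have hFv : ∀ v, Sum.inl v ∈ c (F (Sum.inl v)) := fun v => (hv v).choose_spec.1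
  have hFu : ∀ v i, Sum.inl v ∈ c i → F (Sum.inl v) = i :=
    fun v i hi => ((hv v).choose_spec.2 i hi).symm
  have hFe : F (Sum.inr ()) = i₀ := rfl
  refine ⟨e₀, F, hc2 i₀ e₀ hedge_mem, ⟨?_, ?_, ?_⟩, ?_⟩
  · -- surjective
    intro i
    have hpos : 0 < (c i).card := by rw [hc1]; split <;> omega
    obtain ⟨x, hx⟩ := Finset.card_pos.1 hpos
    obtain v | f := x
    · exact ⟨Sum.inl v, hFu v i hx⟩
    · exact ⟨Sum.inr (), hFe.trans (huniq i f hx).1.symm⟩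
  · -- collisions only at z
    intro x y hxy
    by_cases hxy' : x = y
    · exact Or.inl hxy'
    right
    set toElem : V ⊕ Unit → V ⊕ Sym2 V := Sum.elim Sum.inl (fun _ => Sum.inr e₀) with hte
    have hmem : ∀ a, toElem a ∈ c (F a) := by
      intro a
      obtain v | u := a
      · exact hFv v
      · cases u; exact hedge_mem
    have hne : toElem x ≠ toElem y := by
      obtain v | u := x <;> obtain w | u' := y
      · intro h
        apply hxy'
        have hvw : v = w := by simpa [hte] using h
        rw [hvw]
      · simp [hte]
      · simp [hte]
      · cases u; cases u'; exact absurd rfl hxy'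
    have h2' : 1 < (c (F x)).card :=
      Finset.one_lt_card.2 ⟨toElem x, hmem x, toElem y, by rw [hxy]; exact hmem y, hne⟩
    by_contra hz
    rw [hc1, if_neg hz] at h2'
    omega
  · -- endpoints avoid edge color
    intro v hv' heq
    have h1 : Sum.inl v ∈ c i₀ := by
      have := hFv v
      rwa [heq, hFe] at this
    exact hc4 i₀ (Sum.inl v) h1 (Sum.inr e₀) hedge_mem (by simp) hv'
  · -- recon = c
    funext i
    ext x
    obtain v | f := x
    · rw [mem_recon_inl]
      constructor
      · intro hFi; exact hFi ▸ hFv v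
      · exact hFu v i
    · rw [mem_recon_inr]
      constructor
      · rintro ⟨rfl, hFi⟩
        rw [← hFe, hFi] at hedge_mem
        exact hedge_mem
      · intro hf
        obtain ⟨h1, h2⟩ := huniq i f hf
        exact ⟨h2, hFe.trans h1.symm⟩


lemma count_F {n : ℕ} {G : SimpleGraph V} (hcard : Fintype.card V = n) (z : Fin n)
    (e : Sym2 V) (he : e ∈ G.edgeSet) :
    Nat.card {F : V ⊕ Unit → Fin n // Q z e F} = ((n + 1).choose 2 - 2) * (n - 1).factorial := by
  classical
  have hB : Fintype.card (V ⊕ Unit) = n + 1 := by simp [hcard]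
  obtain ⟨⟨a, b⟩, rfl⟩ := Quot.exists_rep e
  have hmk : (Quot.mk (Sym2.Rel V) (a, b)) = s(a, b) := rfl
  rw [hmk] at he ⊢
  have hab : a ≠ b := by
    have := G.not_isDiag_of_mem_edgeSet he
    simpa [Sym2.mk_isDiag_iff] using this
  set Bad : Finset (V ⊕ Unit) → Prop := fun P =>
    (Sum.inl a ∈ P ∧ Sum.inr () ∈ P) ∨ (Sum.inl b ∈ P ∧ Sum.inr () ∈ P) with hBad
  -- bijection with sigma type
  have hbij : Nat.card (Σ P : {P : Finset (V ⊕ Unit) // P.card = 2 ∧ ¬ Bad P},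
      ({x : V ⊕ Unit // x ∉ P.1} ≃ {j : Fin n // j ≠ z})) =
      Nat.card {F : V ⊕ Unit → Fin n // Q z s(a, b) F} := by
    have hQbuild : ∀ (q : Σ P : {P : Finset (V ⊕ Unit) // P.card = 2 ∧ ¬ Bad P},
        ({x : V ⊕ Unit // x ∉ P.1} ≃ {j : Fin n // j ≠ z})),
        Q z s(a, b) (fun x => if h : x ∈ q.1.1 then z else (q.2 ⟨x, h⟩).1) := by
      rintro ⟨⟨P, hP2, hPb⟩, σ⟩
      refine ⟨?_, ?_, ?_⟩
      · intro j
        by_cases hj : j = z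
        · obtain ⟨x, hx⟩ := Finset.card_pos.1 (by omega : 0 < P.card)
          exact ⟨x, by simp [hx, hj]⟩
        · obtain ⟨⟨x, hxP⟩, hx⟩ := σ.surjective ⟨j, hj⟩
          exact ⟨x, by simp only [dif_neg hxP, hx]⟩
      · intro x y hxy
        dsimp only at hxy ⊢
        by_cases hx : x ∈ P <;> by_cases hy : y ∈ P
        · right; rw [dif_pos hx]
        · rw [dif_pos hx, dif_neg hy] at hxy
          exact absurd hxy.symm (σ ⟨y, hy⟩).2
        · rw [dif_neg hx, dif_pos hy] at hxy
          exact absurd hxy (σ ⟨x, hx⟩).2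
        · rw [dif_neg hx, dif_neg hy] at hxy
          left
          exact congrArg Subtype.val (σ.injective (Subtype.ext hxy))
      · intro v hv heq
        dsimp only at heq
        by_cases h1 : Sum.inl v ∈ P <;> by_cases h2 : Sum.inr () ∈ P
        · apply hPb
          rcases Sym2.mem_iff.1 hv with rfl | rfl
          · exact Or.inl ⟨h1, h2⟩
          · exact Or.inr ⟨h1, h2⟩
        · rw [dif_pos h1, dif_neg h2] at heq
          exact (σ ⟨_, h2⟩).2 heq.symm
        · rw [dif_neg h1, dif_pos h2] at heq
          exact (σ ⟨_, h1⟩).2 heq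
        · rw [dif_neg h1, dif_neg h2] at heq
          have := σ.injective (Subtype.ext heq)
          simp at this
    apply Nat.card_eq_of_bijective
      (fun q => ⟨fun x => if h : x ∈ q.1.1 then z else (q.2 ⟨x, h⟩).1, hQbuild q⟩)
    constructor
    · rintro ⟨⟨P, hP2, hPb⟩, σ⟩ ⟨⟨P', hP2', hPb'⟩, σ'⟩ hFF
      have hFF' : ∀ x, (if h : x ∈ P then z else (σ ⟨x, h⟩).1) =
          (if h : x ∈ P' then z else (σ' ⟨x, h⟩).1) := fun x => congrFun (congrArg Subtype.val hFF) x
      have hPP : P = P' := by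
        ext x
        constructor
        · intro hx
          by_contra hx'
          have := hFF' x
          rw [dif_pos hx, dif_neg hx'] at this
          exact (σ' ⟨x, hx'⟩).2 this.symm
        · intro hx
          by_contra hx'
          have := hFF' x
          rw [dif_neg hx', dif_pos hx] at this
          exact (σ ⟨x, hx'⟩).2 this
      subst hPP
      have hσ : σ = σ' := by
        apply Equiv.ext
        rintro ⟨x, hx⟩
        have := hFF' x
        rw [dif_neg hx, dif_neg hx] at this
        exact Subtype.ext this
      subst hσ
      rfl
    · rintro ⟨F, hFs, hFcol, hFe⟩
      set P : Finset (V ⊕ Unit) := univ.filter fun x => F x = z with hPdef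
      have hfib := fiber_card hB z F hFs hFcol
      have hmemP : ∀ x, x ∈ P ↔ F x = z := by intro x; simp [hPdef]
      have hP2 : P.card = 2 := hfib.1
      have hPb : ¬ Bad P := by
        rintro (⟨h1, h2⟩ | ⟨h1, h2⟩)
        · exact hFe a (by simp) (((hmemP _).1 h1).trans ((hmemP _).1 h2).symm)
        · exact hFe b (by simp) (((hmemP _).1 h1).trans ((hmemP _).1 h2).symm)
      have hbij2 : Function.Bijective
          (fun x : {x : V ⊕ Unit // x ∉ P} => (⟨F x.1, fun hz => x.2 ((hmemP _).2 hz)⟩ :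
            {j : Fin n // j ≠ z})) := by
        constructor
        · rintro ⟨x, hx⟩ ⟨y, hy⟩ hxy
          have : F x = F y := congrArg Subtype.val hxy
          rcases hFcol x y this with h | h
          · exact Subtype.ext h
          · exact absurd h (fun hz => hx ((hmemP _).2 hz))
        · rintro ⟨j, hj⟩
          obtain ⟨x, hx⟩ := hFs j
          refine ⟨⟨x, fun hmem => hj ((((hmemP _).1 hmem).symm.trans hx).symm ▸ rfl)⟩, ?_⟩
          · exact Subtype.ext hx
      refine ⟨⟨⟨P, hP2, hPb⟩, Equiv.ofBijective _ hbij2⟩, ?_⟩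
      apply Subtype.ext
      funext x
      by_cases hx : x ∈ P
      · simp only [dif_pos hx]
        exact ((hmemP x).1 hx).symm
      · simp only [dif_neg hx]
        rfl

  rw [← hbij]
  -- compute the sigma cardinality
  rw [Nat.card_eq_fintype_card, Fintype.card_sigma]
  have hcfix : ∀ P : {P : Finset (V ⊕ Unit) // P.card = 2 ∧ ¬ Bad P},
      Fintype.card ({x : V ⊕ Unit // x ∉ P.1} ≃ {j : Fin n // j ≠ z}) = (n - 1).factorial := by
    intro P
    have hc1 : Fintype.card {x : V ⊕ Unit // x ∉ P.1} = n - 1 := by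
      rw [Fintype.card_subtype_compl, Fintype.card_coe, hB, P.2.1]
      rfl
    have hc2 : Fintype.card {j : Fin n // j ≠ z} = n - 1 := by
      rw [Fintype.card_subtype_compl, Fintype.card_subtype_eq, Fintype.card_fin]
    rw [Fintype.card_equiv (Fintype.equivOfCardEq (hc1.trans hc2.symm)), hc1]
  rw [Finset.sum_congr rfl fun P _ => hcfix P, Finset.sum_const, card_univ, smul_eq_mul]
  congr 1
  -- count the allowed 2-subsets
  rw [Fintype.card_subtype]
  rw [show (univ.filter fun P : Finset (V ⊕ Unit) => P.card = 2 ∧ ¬ Bad P) =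
      (univ.filter fun P : Finset (V ⊕ Unit) => P.card = 2).filter (fun P => ¬ Bad P) by
    rw [Finset.filter_filter]]
  have hsplit := Finset.card_filter_add_card_filter_not
    (s := univ.filter fun P : Finset (V ⊕ Unit) => P.card = 2) (p := fun P => ¬ Bad P)
  have hS2 : (univ.filter fun P : Finset (V ⊕ Unit) => P.card = 2).card = (n + 1).choose 2 := by
    rw [show (univ.filter fun P : Finset (V ⊕ Unit) => P.card = 2) =
        Finset.powersetCard 2 univ by
      ext P; simp [Finset.mem_powersetCard]]
    rw [Finset.card_powersetCard, card_univ, hB]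
  have hbadset : ((univ.filter fun P : Finset (V ⊕ Unit) => P.card = 2).filter
      (fun P => ¬ ¬ Bad P)) = {{Sum.inl a, Sum.inr ()}, {Sum.inl b, Sum.inr ()}} := by
    ext P
    simp only [Finset.mem_filter, mem_univ, true_and, not_not, Finset.mem_insert,
      Finset.mem_singleton]
    constructor
    · rintro ⟨hP2, ⟨h1, h2⟩ | ⟨h1, h2⟩⟩
      · left
        refine (Finset.eq_of_subset_of_card_le ?_ ?_).symm
        · intro x hx
          rcases Finset.mem_insert.1 hx with rfl | hx
          · exact h1
          · rw [Finset.mem_singleton.1 hx]; exact h2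
        · rw [hP2, Finset.card_insert_of_notMem (by simp), Finset.card_singleton]
      · right
        refine (Finset.eq_of_subset_of_card_le ?_ ?_).symm
        · intro x hx
          rcases Finset.mem_insert.1 hx with rfl | hx
          · exact h1
          · rw [Finset.mem_singleton.1 hx]; exact h2
        · rw [hP2, Finset.card_insert_of_notMem (by simp), Finset.card_singleton]
    · rintro (rfl | rfl)
      · exact ⟨by rw [Finset.card_insert_of_notMem (by simp), Finset.card_singleton],
          Or.inl ⟨by simp, by simp⟩⟩
      · exact ⟨by rw [Finset.card_insert_of_notMem (by simp), Finset.card_singleton],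
          Or.inr ⟨by simp, by simp⟩⟩
  have hbadcard : ((univ.filter fun P : Finset (V ⊕ Unit) => P.card = 2).filter
      (fun P => ¬ ¬ Bad P)).card = 2 := by
    rw [hbadset]
    rw [Finset.card_insert_of_notMem, Finset.card_singleton]
    simp only [Finset.mem_singleton]
    intro hcontra
    have : Sum.inl a ∈ ({Sum.inl b, Sum.inr ()} : Finset (V ⊕ Unit)) := by
      rw [← hcontra]; simp
    rcases Finset.mem_insert.1 this with h | h
    · exact hab (Sum.inl.inj h)
    · simp at h
  omega

end CountAux

/-- For `r⃗ = (2,1,…,1) ∈ ℤⁿ`, the number of 1-cells of `S_{r⃗}(G)` equals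
`m(n−1)!(n² + n − 4)/2`. -/
theorem count_one_cells {V : Type*} [Fintype V] [DecidableEq V]
    (G : SimpleGraph V) [DecidableRel G.Adj] (n m : ℕ) (hn : 2 ≤ n)
    (h : Fintype.card V = n) (hm : G.edgeFinset.card = m) :
    Nat.card {c : Fin n → Finset (V ⊕ Sym2 V) //
        IsCell G (fun k => if (k : ℕ) = 0 then 2 else 1) c ∧ cellDim c = 1} =
      m * (n - 1).factorial * (n ^ 2 + n - 4) / 2 := by

  classical
  subst h
  have hpos : 0 < Fintype.card V := by omega
  set z : Fin (Fintype.card V) := ⟨0, hpos⟩ with hz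
  have hiff : ∀ i : Fin (Fintype.card V), ((i : ℕ) = 0) ↔ (i = z) := by
    intro i
    rw [Fin.ext_iff]
  have hℓ : (fun k : Fin (Fintype.card V) => if (k : ℕ) = 0 then 2 else 1) =
      (fun k => if k = z then 2 else 1) :=
    funext fun k => if_congr (hiff k) rfl rfl
  have step1 : Nat.card {c : Fin (Fintype.card V) → Finset (V ⊕ Sym2 V) //
      IsCell G (fun k => if (k : ℕ) = 0 then 2 else 1) c ∧ cellDim c = 1} =
      Nat.card {p : Sym2 V × (V ⊕ Unit → Fin (Fintype.card V)) //
        p.1 ∈ G.edgeSet ∧ CountAux.Q z p.1 p.2} := by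
    have hcellprop : ∀ p : {p : Sym2 V × (V ⊕ Unit → Fin (Fintype.card V)) //
        p.1 ∈ G.edgeSet ∧ CountAux.Q z p.1 p.2},
        IsCell G (fun k => if (k : ℕ) = 0 then 2 else 1) (CountAux.recon p.1.1 p.1.2) ∧
          cellDim (CountAux.recon p.1.1 p.1.2) = 1 := by
      intro p
      rw [hℓ]
      exact CountAux.recon_cell rfl z p.1.1 p.1.2 p.2.1 p.2.2
    refine (Nat.card_eq_of_bijective
      (fun p => ⟨CountAux.recon p.1.1 p.1.2, hcellprop p⟩) ⟨?_, ?_⟩).symm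
    · rintro ⟨⟨e, F⟩, he, hQ⟩ ⟨⟨e', F'⟩, he', hQ'⟩ hpp
      have hr : CountAux.recon e F = CountAux.recon e' F' := congrArg Subtype.val hpp
      have hmem : ∀ (i : Fin (Fintype.card V)) (x : V ⊕ Sym2 V),
          x ∈ CountAux.recon e F i ↔ x ∈ CountAux.recon e' F' i := fun i x => by rw [hr]
      have hFv : ∀ v, F' (.inl v) = F (.inl v) := by
        intro v
        exact CountAux.mem_recon_inl.1
          ((hmem (F (.inl v)) (Sum.inl v)).1 (CountAux.mem_recon_inl.2 rfl))
      have hee : e = e' ∧ F' (.inr ()) = F (.inr ()) :=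
        CountAux.mem_recon_inr.1
          ((hmem (F (.inr ())) (Sum.inr e)).1 (CountAux.mem_recon_inr.2 ⟨rfl, rfl⟩))
      apply Subtype.ext
      dsimp only
      rw [Prod.mk.injEq]
      refine ⟨hee.1, funext fun x => ?_⟩
      obtain v | u := x
      · exact (hFv v).symm
      · cases u; exact hee.2.symm
    · rintro ⟨c, hcell, hdim⟩
      obtain ⟨hc1, hc2, hc3, hc4⟩ := hcell
      have hc1' : ∀ i, (c i).card = if i = z then 2 else 1 :=
        fun i => (hc1 i).trans (if_congr (hiff i) rfl rfl)
      obtain ⟨e, F, he, hQ, hrec⟩ := CountAux.exists_repr rfl z c hc1' hc2 hc3 hc4 hdim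
      exact ⟨⟨(e, F), he, hQ⟩, Subtype.ext hrec⟩
  rw [step1]
  have step2 : Nat.card {p : Sym2 V × (V ⊕ Unit → Fin (Fintype.card V)) //
      p.1 ∈ G.edgeSet ∧ CountAux.Q z p.1 p.2} =
      Nat.card (Σ e : {e : Sym2 V // e ∈ G.edgeFinset},
        {F : V ⊕ Unit → Fin (Fintype.card V) // CountAux.Q z e.1 F}) := by
    refine (Nat.card_eq_of_bijective
      (fun q => ⟨(q.1.1, q.2.1), SimpleGraph.mem_edgeFinset.1 q.1.2, q.2.2⟩) ⟨?_, ?_⟩).symm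
    · rintro ⟨⟨e, he⟩, ⟨F, hF⟩⟩ ⟨⟨e', he'⟩, ⟨F', hF'⟩⟩ hq
      simp only [Subtype.mk.injEq, Prod.mk.injEq] at hq
      obtain ⟨h1, h2⟩ := hq
      subst h1
      subst h2
      rfl
    · rintro ⟨⟨e, F⟩, he, hQ⟩
      exact ⟨⟨⟨e, SimpleGraph.mem_edgeFinset.2 he⟩, ⟨F, hQ⟩⟩, rfl⟩
  rw [step2, Nat.card_eq_fintype_card, Fintype.card_sigma]
  have hcF : ∀ e : {e : Sym2 V // e ∈ G.edgeFinset},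
      Fintype.card {F : V ⊕ Unit → Fin (Fintype.card V) // CountAux.Q z e.1 F} =
      ((Fintype.card V + 1).choose 2 - 2) * (Fintype.card V - 1).factorial := by
    intro e
    rw [← Nat.card_eq_fintype_card]
    exact CountAux.count_F rfl z e.1 (SimpleGraph.mem_edgeFinset.1 e.2)
  rw [Finset.sum_congr rfl fun e _ => hcF e, Finset.sum_const, Finset.card_univ,
    Fintype.card_coe, hm, smul_eq_mul]
  set N := Fintype.card V with hN
  have hk : 2 ∣ N * (N + 1) := (Nat.even_mul_succ_self N).two_dvd
  have h1 : (N + 1).choose 2 = N * (N + 1) / 2 := by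
    rw [Nat.choose_two_right]
    congr 1
    simp [Nat.mul_comm]
  have h4 : N ^ 2 + N = N * (N + 1) := by ring
  have hdvd4 : 2 ∣ N * (N + 1) - 4 := by omega
  have h6 : N ^ 2 + N - 4 = N * (N + 1) - 4 := by omega
  rw [h1, h6, Nat.mul_div_assoc (m * (N - 1).factorial) hdvd4]
  have h5 : N * (N + 1) / 2 - 2 = (N * (N + 1) - 4) / 2 := by omega
  rw [h5]
  ring
end

section
/- Let G be a simple graph with n vertices and m edges, let r ≥ 2 be an integer, and let r⃗ = (n−1,…,n−1) ∈ ℤʳ. The number of r-cells of S_{r⃗}(G) equals mʳ + m − Σ_{v ∈ V(G)} deg(v)ʳ. -/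
section Aux

open Finset

variable {V : Type*} [Fintype V] [DecidableEq V]

/-- The point set of an element of `V ⊕ Sym2 V`. -/
def pset : V ⊕ Sym2 V → Finset V
  | .inl v => {v}
  | .inr e => Finset.univ.filter (· ∈ e)

lemma pset_disjoint {x y : V ⊕ Sym2 V} (h : ¬ overlap x y) :
    Disjoint (pset x) (pset y) := by
  rw [Finset.disjoint_left]
  cases x <;> cases y <;> simp_all [pset, overlap] <;> aesop

lemma pset_card_inr {e : Sym2 V} (he : ¬ e.IsDiag) :
    (pset (.inr e : V ⊕ Sym2 V)).card = 2 := by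
  induction e with
  | _ a b =>
    have hab : a ≠ b := by simpa [Sym2.mk_isDiag_iff] using he
    have : pset (.inr s(a, b) : V ⊕ Sym2 V) = {a, b} := by
      ext v; simp [pset, Sym2.mem_iff]
    rw [this, Finset.card_pair hab]

/-- The unique color containing a given edge. -/
def col (e : Sym2 V) : Finset (V ⊕ Sym2 V) :=
  insert (.inr e) ((Finset.univ.filter (fun v => v ∉ e)).image Sum.inl)

lemma mem_col_inl {e : Sym2 V} {v : V} : (.inl v : V ⊕ Sym2 V) ∈ col e ↔ v ∉ e := by
  simp [col]

lemma mem_col_inr {e f : Sym2 V} : (.inr f : V ⊕ Sym2 V) ∈ col e ↔ f = e := by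
  simp [col]

lemma col_card {n : ℕ} {e : Sym2 V} (he : ¬ e.IsDiag) (h : Fintype.card V = n)
    (hn : 2 ≤ n) : (col e).card = n - 1 := by
  have h2 : (Finset.univ.filter (· ∈ e)).card = 2 := pset_card_inr he
  have h3 := Finset.card_filter_add_card_filter_not (s := (Finset.univ : Finset V))
    (p := (· ∈ e))
  rw [Finset.card_univ, h] at h3
  rw [col, Finset.card_insert_of_notMem (by simp),
    Finset.card_image_of_injective _ Sum.inl_injective]
  omega

lemma col_filter_isRight {e : Sym2 V} :
    (col e).filter (fun x => x.isRight) = {(.inr e : V ⊕ Sym2 V)} := by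
  ext x; cases x <;> simp [col]

lemma cell_iff_exists {n r : ℕ} (G : SimpleGraph V) (hn : 2 ≤ n)
    (h : Fintype.card V = n) (c : Fin r → Finset (V ⊕ Sym2 V)) :
    (IsCell G (fun _ => n - 1) c ∧ cellDim c = r) ↔
      ∃ e : Fin r → Sym2 V, (∀ i, e i ∈ G.edgeSet) ∧ (¬ ∃ v, ∀ i, v ∈ e i) ∧
        c = fun i => col (e i) := by
  constructor
  · rintro ⟨⟨hcard, hedge, hcov, hdisj⟩, hd⟩
    -- each color contains at most one edge
    have hps : ∀ i, ∀ x ∈ c i, (pset x).card = (if x.isRight then 2 else 1) := by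
      intro i x hx
      cases x with
      | inl v => simp [pset]
      | inr f =>
        simpa using pset_card_inr (G.not_isDiag_of_mem_edgeSet (hedge i f hx))
    have hk : ∀ i, ((c i).filter (fun x => x.isRight)).card ≤ 1 := by
      intro i
      have h1 : ((c i).biUnion pset).card = ∑ x ∈ c i, (pset x).card :=
        Finset.card_biUnion (fun x hx y hy hxy => pset_disjoint (hdisj i x hx y hy hxy))
      have h2 : ∑ x ∈ c i, (pset x).card
          = (n - 1) + ((c i).filter (fun x => x.isRight)).card := by
        rw [Finset.card_filter]
        calc ∑ x ∈ c i, (pset x).card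
            = ∑ x ∈ c i, (1 + if x.isRight then 1 else 0) :=
              Finset.sum_congr rfl (fun x hx => by rw [hps i x hx]; split <;> rfl)
          _ = (c i).card + ∑ x ∈ c i, (if x.isRight then 1 else 0) := by
              rw [Finset.sum_add_distrib, Finset.sum_const, smul_eq_mul, mul_one]
          _ = _ := by rw [hcard i]
      have h3 : ((c i).biUnion pset).card ≤ n := by
        rw [← h, ← Finset.card_univ]; exact Finset.card_le_univ _
      omega
    have hk1 : ∀ i, ((c i).filter (fun x => x.isRight)).card = 1 := by
      have hsum : ∑ i : Fin r, ((c i).filter (fun x => x.isRight)).card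
          = ∑ _i : Fin r, 1 := by
        have h1 : ∑ _i : Fin r, 1 = r := by simp
        rw [h1]; exact hd
      have := (Finset.sum_eq_sum_iff_of_le (fun i _ => hk i)).1 hsum
      exact fun i => this i (Finset.mem_univ i)
    have hE : ∀ i, ∃ f : Sym2 V, (c i).filter (fun x => x.isRight) = {.inr f} := by
      intro i
      obtain ⟨a, ha⟩ := Finset.card_eq_one.1 (hk1 i)
      have haa : a ∈ (c i).filter (fun x => x.isRight) := ha ▸ Finset.mem_singleton_self a
      rcases a with v | f
      · simp at haa
      · exact ⟨f, ha⟩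
    choose e he using hE
    have hei : ∀ i, Sum.inr (e i) ∈ c i := by
      intro i
      have : (.inr (e i) : V ⊕ Sym2 V) ∈ (c i).filter (fun x => x.isRight) := by
        rw [he i]; exact Finset.mem_singleton_self _
      exact (Finset.mem_filter.1 this).1
    have heE : ∀ i, e i ∈ G.edgeSet := fun i => hedge i _ (hei i)
    have hceq : ∀ i, c i = col (e i) := by
      intro i
      apply Finset.eq_of_subset_of_card_le
      · intro x hx
        rcases x with v | g
        · have hne : (Sum.inl v : V ⊕ Sym2 V) ≠ Sum.inr (e i) := by simp
          have hov := hdisj i _ hx _ (hei i) hne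
          exact mem_col_inl.2 (by simpa [overlap] using hov)
        · have : (.inr g : V ⊕ Sym2 V) ∈ ({.inr (e i)} : Finset (V ⊕ Sym2 V)) := by
            rw [← he i]; exact Finset.mem_filter.2 ⟨hx, rfl⟩
          simp only [Finset.mem_singleton, Sum.inr.injEq] at this
          exact mem_col_inr.2 this
      · rw [hcard i, col_card (G.not_isDiag_of_mem_edgeSet (heE i)) h hn]
    refine ⟨e, heE, ?_, funext hceq⟩
    rintro ⟨v, hv⟩
    obtain ⟨i, hi⟩ := hcov v
    rw [hceq i] at hi
    exact (mem_col_inl.1 hi) (hv i)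
  · rintro ⟨e, heE, hgood, rfl⟩
    have hdiag : ∀ i, ¬ (e i).IsDiag := fun i => G.not_isDiag_of_mem_edgeSet (heE i)
    refine ⟨⟨fun i => col_card (hdiag i) h hn, ?_, ?_, ?_⟩, ?_⟩
    · intro i f hf
      rw [mem_col_inr.1 hf]; exact heE i
    · intro v
      push_neg at hgood
      obtain ⟨i, hi⟩ := hgood v
      exact ⟨i, mem_col_inl.2 hi⟩
    · intro i x hx y hy hxy
      rcases x with v | f <;> rcases y with w | g
      · intro hov
        exact hxy (by rw [show v = w from hov])
      · rw [mem_col_inr.1 hy] at *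
        exact fun hov => (mem_col_inl.1 hx) hov
      · rw [mem_col_inr.1 hx] at *
        exact fun hov => (mem_col_inl.1 hy) hov
      · rw [mem_col_inr.1 hx, mem_col_inr.1 hy] at hxy
        exact absurd rfl hxy
    · simp [cellDim, col_filter_isRight]

end Aux

/-- For `r⃗ = (n−1,…,n−1) ∈ ℤʳ`, the number of `r`-cells of `S_{r⃗}(G)`
equals `mʳ + m − Σ_v deg(v)ʳ`. -/
theorem count_top_cells_regular_vector {V : Type*} [Fintype V] [DecidableEq V]
    (G : SimpleGraph V) [DecidableRel G.Adj] (n m r : ℕ) (hn : 2 ≤ n)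
    (h : Fintype.card V = n) (hm : G.edgeFinset.card = m) (hr : 2 ≤ r) :
    Nat.card {c : Fin r → Finset (V ⊕ Sym2 V) //
        IsCell G (fun _ => n - 1) c ∧ cellDim c = r} =
      m ^ r + m - ∑ v : V, G.degree v ^ r := by
  classical
  -- the good tuples of edges
  set Q : (Fin r → Sym2 V) → Prop :=
    fun e => (∀ i, e i ∈ G.edgeSet) ∧ ¬ ∃ v, ∀ i, v ∈ e i with hQ
  set S : Finset (Fin r → Sym2 V) := Finset.univ.filter Q with hS
  -- step 1: bijection with good tuples
  have key : Nat.card {c : Fin r → Finset (V ⊕ Sym2 V) //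
      IsCell G (fun _ => n - 1) c ∧ cellDim c = r} = S.card := by
    rw [← Nat.card_eq_finsetCard]
    apply Nat.card_congr
    apply Equiv.symm
    refine Equiv.ofBijective
      (fun e => ⟨fun i => col (e.1 i), (cell_iff_exists G hn h _).2
        ⟨e.1, (Finset.mem_filter.1 e.2).2.1, (Finset.mem_filter.1 e.2).2.2, rfl⟩⟩) ⟨?_, ?_⟩
    · rintro ⟨e, he⟩ ⟨e', he'⟩ hee
      simp only [Subtype.mk.injEq] at hee ⊢
      funext i
      have : (.inr (e i) : V ⊕ Sym2 V) ∈ col (e' i) := by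
        rw [← congrFun hee i]; exact Finset.mem_insert_self _ _
      exact mem_col_inr.1 this
    · rintro ⟨c, hc⟩
      obtain ⟨e, h1, h2, h3⟩ := (cell_iff_exists G hn h c).1 hc
      exact ⟨⟨e, Finset.mem_filter.2 ⟨Finset.mem_univ _, h1, h2⟩⟩, Subtype.ext h3.symm⟩
  rw [key]
  -- step 2: counting good tuples
  set A : Finset (Fin r → Sym2 V) :=
    Finset.univ.filter (fun e => ∀ i, e i ∈ G.edgeSet) with hA
  set B : Finset (Fin r → Sym2 V) :=
    A.filter (fun e => ∃ v, ∀ i, v ∈ e i) with hB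
  have hAcard : A.card = m ^ r := by
    have : A = Fintype.piFinset (fun _ : Fin r => G.edgeFinset) := by
      ext f; simp [hA, Fintype.mem_piFinset, SimpleGraph.mem_edgeFinset]
    rw [this, Fintype.card_piFinset]
    simp [hm]
  have hsplit : B.card + S.card = A.card := by
    have : S = A.filter (fun e => ¬ ∃ v, ∀ i, v ∈ e i) := by
      ext f; simp [hS, hA, hQ, Finset.mem_filter, and_assoc]
    rw [this, hB]
    exact Finset.card_filter_add_card_filter_not _
  -- double counting
  set T : Finset (V × (Fin r → Sym2 V)) :=
    Finset.univ.filter (fun p => (∀ i, p.2 i ∈ G.edgeSet) ∧ ∀ i, p.1 ∈ p.2 i) with hT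
  have hT1 : T.card = ∑ v : V, G.degree v ^ r := by
    rw [Finset.card_eq_sum_card_fiberwise (f := Prod.fst) (t := Finset.univ)
      (fun x _ => Finset.mem_univ _)]
    refine Finset.sum_congr rfl (fun v _ => ?_)
    have : T.filter (fun p => p.1 = v)
        = {v} ×ˢ (Fintype.piFinset fun _ : Fin r => G.incidenceFinset v) := by
      ext ⟨w, f⟩
      simp only [hT, Finset.mem_filter, Finset.mem_univ, true_and, Finset.mem_product,
        Finset.mem_singleton, Fintype.mem_piFinset, SimpleGraph.mem_incidenceFinset,
        SimpleGraph.incidenceSet, Set.mem_setOf_eq]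
      constructor
      · rintro ⟨⟨h1, h2⟩, rfl⟩; exact ⟨rfl, fun i => ⟨h1 i, h2 i⟩⟩
      · rintro ⟨rfl, h1⟩; exact ⟨⟨fun i => (h1 i).1, fun i => (h1 i).2⟩, rfl⟩
    rw [this, Finset.card_product, Finset.card_singleton, one_mul, Fintype.card_piFinset]
    simp [SimpleGraph.card_incidenceFinset_eq_degree]
  have hT2 : T.card = ∑ f ∈ B, (Finset.univ.filter (fun v => ∀ i, v ∈ f i)).card := by
    rw [Finset.card_eq_sum_card_fiberwise (f := Prod.snd) (t := B) ?_]
    · refine Finset.sum_congr rfl (fun f hf => ?_)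
      have hfB := Finset.mem_filter.1 hf
      have hfA := Finset.mem_filter.1 hfB.1
      have : T.filter (fun p => p.2 = f)
          = (Finset.univ.filter (fun v => ∀ i, v ∈ f i)) ×ˢ {f} := by
        ext ⟨w, g⟩
        simp only [hT, Finset.mem_filter, Finset.mem_univ, true_and, Finset.mem_product,
          Finset.mem_singleton]
        constructor
        · rintro ⟨⟨h1, h2⟩, rfl⟩; exact ⟨h2, rfl⟩
        · rintro ⟨h1, rfl⟩; exact ⟨⟨hfA.2, h1⟩, rfl⟩
      rw [this, Finset.card_product, Finset.card_singleton, mul_one]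
    · rintro ⟨w, f⟩ hp
      have := Finset.mem_filter.1 hp
      exact Finset.mem_filter.2 ⟨Finset.mem_filter.2 ⟨Finset.mem_univ _, this.2.1⟩,
        ⟨w, this.2.2⟩⟩
  -- evaluating the fiber sum
  obtain ⟨i0⟩ : Nonempty (Fin r) := ⟨⟨0, lt_of_lt_of_le zero_lt_two hr⟩⟩
  have hBsum : ∑ f ∈ B, (Finset.univ.filter (fun v => ∀ i, v ∈ f i)).card
      = B.card + m := by
    set P : (Fin r → Sym2 V) → Prop := fun f => ∀ i, f i = f i0 with hP
    have hconst : ∀ f ∈ B.filter P,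
        (Finset.univ.filter (fun v => ∀ i, v ∈ f i)).card = 2 := by
      intro f hf
      have hfP := Finset.mem_filter.1 hf
      have hfA := Finset.mem_filter.1 (Finset.mem_filter.1 hfP.1).1
      have hd : ¬ (f i0).IsDiag :=
        G.not_isDiag_of_mem_edgeSet (hfA.2 _)
      have : (Finset.univ.filter (fun v => ∀ i, v ∈ f i))
          = pset (.inr (f i0)) := by
        ext v
        simp only [Finset.mem_filter, Finset.mem_univ, true_and, pset]
        constructor
        · intro hv; exact hv _
        · intro hv i; rw [hfP.2 i]; exact hv
      rw [this, pset_card_inr hd]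
    have hnonconst : ∀ f ∈ B.filter (fun f => ¬ P f),
        (Finset.univ.filter (fun v => ∀ i, v ∈ f i)).card = 1 := by
      intro f hf
      have hfP := Finset.mem_filter.1 hf
      have hfB := Finset.mem_filter.1 hfP.1
      obtain ⟨v, hv⟩ := hfB.2
      rw [Finset.card_eq_one]
      refine ⟨v, ?_⟩
      ext w
      simp only [Finset.mem_filter, Finset.mem_univ, true_and, Finset.mem_singleton]
      constructor
      · intro hw
        by_contra hwv
        have : ∃ i, f i ≠ f i0 := by
          by_contra hcon; push_neg at hcon; exact hfP.2 hcon
        obtain ⟨i, hi⟩ := this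
        exact hi (Sym2.eq_of_ne_mem hwv (hw i) (hv i) (hw _) (hv _))
      · rintro rfl; exact hv
    rw [← Finset.sum_filter_add_sum_filter_not B P]
    rw [Finset.sum_congr rfl hconst, Finset.sum_congr rfl hnonconst,
      Finset.sum_const, Finset.sum_const, smul_eq_mul, smul_eq_mul, mul_one]
    have hsplit2 : (B.filter P).card + (B.filter (fun f => ¬ P f)).card = B.card :=
      Finset.card_filter_add_card_filter_not _
    have hBc : (B.filter P).card = m := by
      rw [← hm]
      apply Finset.card_bij (fun f _ => f i0)
      · intro f hf
        have hfA := Finset.mem_filter.1 (Finset.mem_filter.1 (Finset.mem_filter.1 hf).1).1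
        exact SimpleGraph.mem_edgeFinset.2 (hfA.2 _)
      · intro f hf g hg hfg
        funext i
        rw [(Finset.mem_filter.1 hf).2 i, (Finset.mem_filter.1 hg).2 i, hfg]
      · intro e he
        refine ⟨fun _ => e, ?_, rfl⟩
        have heE : e ∈ G.edgeSet := SimpleGraph.mem_edgeFinset.1 he
        refine Finset.mem_filter.2 ⟨Finset.mem_filter.2 ⟨Finset.mem_filter.2
          ⟨Finset.mem_univ _, fun _ => heE⟩, ⟨(Quot.out e).1, fun _ => e.out_fst_mem⟩⟩,
          fun _ => rfl⟩
    clear * - hsplit2 hBc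
    omega
  have e2 : ∑ v : V, G.degree v ^ r = B.card + m := hT1.symm.trans (hT2.trans hBsum)
  have e1 : B.card + S.card = m ^ r := hAcard ▸ hsplit
  clear * - e1 e2
  omega
end

section
/- Let G be a simple graph on n ≥ 2 vertices with vertex set V. The number of tuples (S, f) where S is a 2-element subset of V and f assigns to each of the n−1 colors 2,…,n an element of V, such that every vertex of V is either in S or in the image of f, and moreover the multiset S together with the values of f uses exactly n+1 vertex slots covering all n vertices, equals n!(n²+n−2)/4. -/
/-!
For a fixed 2-set `S`, the pair `(S, f)` is admissible iff the range of `f` contains the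
`(n - 2)`-set `Sᶜ`. Splitting a map `Fin (m + 1) → V` into its value `x` at `0` and the
remaining `m` values shows that the number `a(m, t)` of maps `Fin m → V` whose range contains a
given `t`-set depends only on `t`, via `a(m + 1, t) = t a(m, t - 1) + (N - t) a(m, t)`:
either `x` is one of the `t` required points, or one of the `N - t` others. This recursion gives
`a(m, m) = m!` and `a(m + 1, m) = (m + 1)! (N - m) + C(m + 1, 2) m!`, so the count is
`C(n, 2) (2 (n - 1)! + C(n - 1, 2) (n - 2)!) = n! (n² + n - 2) / 4`.
-/

open Finset Nat

def coveringCount (N : ℕ) : ℕ → ℕ → ℕ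
  | 0, t => if t = 0 then 1 else 0
  | m + 1, t => t * coveringCount N m (t - 1) + (N - t) * coveringCount N m t

theorem card_covering_eq_coveringCount {V : Type*} [Fintype V] (m : ℕ) (T : Finset V) :
    Nat.card {f : Fin m → V // ∀ v ∈ T, ∃ k, f k = v} =
      coveringCount (Fintype.card V) m #T := by
  classical
  induction m generalizing T with
  | zero =>
    simp only [IsEmpty.exists_iff, coveringCount, Finset.card_eq_zero]
    split_ifs with hT
    · simp [hT]
    · obtain ⟨v, hv⟩ := nonempty_iff_ne_empty.2 hT
      exact Nat.card_eq_zero.2 (Or.inl ⟨fun f ↦ f.2 v hv⟩)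
  | succ m ih =>
    set N := Fintype.card V
    have hcons (p : V × (Fin m → V)) :
        (∀ v ∈ T.erase p.1, ∃ k, p.2 k = v) ↔
          ∀ v ∈ T, ∃ k, Fin.consEquiv (fun _ ↦ V) p k = v := by
      simp only [mem_erase, ne_eq, eq_comm, and_imp, Fin.consEquiv, Equiv.coe_fn_mk,
        Fin.exists_fin_succ, Fin.cons_zero, Fin.cons_succ, or_iff_not_imp_left]
      exact forall_congr' fun _ ↦ Imp.swap
    have hin : ∑ x ∈ T, coveringCount N m #(T.erase x) = #T * coveringCount N m (#T - 1) := by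
      rw [sum_congr rfl fun x hx ↦ by rw [card_erase_of_mem hx], sum_const, smul_eq_mul]
    have hout :
        ∑ x ∈ Tᶜ, coveringCount N m #(T.erase x) = (N - #T) * coveringCount N m #T := by
      rw [sum_congr rfl fun x hx ↦ by rw [erase_eq_of_notMem (mem_compl.1 hx)], sum_const,
        card_compl, smul_eq_mul]
    calc Nat.card {f : Fin (m + 1) → V // ∀ v ∈ T, ∃ k, f k = v}
        = Nat.card ((x : V) × {g : Fin m → V // ∀ v ∈ T.erase x, ∃ k, g k = v}) :=
          Nat.card_congr <| ((Fin.consEquiv fun _ ↦ V).subtypeEquiv hcons).symm.trans <|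
            Equiv.subtypeProdEquivSigmaSubtype fun x (g : Fin m → V) ↦
              ∀ v ∈ T.erase x, ∃ k, g k = v
      _ = ∑ x, coveringCount N m #(T.erase x) := by rw [Nat.card_sigma]; simp only [ih]
      _ = coveringCount N (m + 1) #T := by rw [← sum_add_sum_compl T, hin, hout, coveringCount]

namespace coveringCount

variable {N : ℕ}

theorem eq_zero_of_lt {m t : ℕ} (h : m < t) : coveringCount N m t = 0 := by
  induction m generalizing t with
  | zero => simp [coveringCount, h.ne']
  | succ m ih => simp [coveringCount, ih (show m < t by omega), ih (show m < t - 1 by omega)]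

theorem self (m : ℕ) : coveringCount N m m = m ! := by
  induction m with
  | zero => simp [coveringCount]
  | succ m ih => simp [coveringCount, ih, eq_zero_of_lt (Nat.lt_succ_self m), Nat.factorial_succ]

theorem succ_self {m : ℕ} (h : m ≤ N) :
    coveringCount N (m + 1) m = (m + 1)! * (N - m) + (m + 1).choose 2 * m ! := by
  induction m with
  | zero => simp [coveringCount]
  | succ m ih =>
    obtain ⟨d, rfl⟩ := Nat.exists_eq_add_of_le h
    rw [coveringCount, Nat.add_sub_cancel, ih (by omega), self, Nat.choose_succ_succ (m + 1),
      Nat.factorial_succ (m + 1), show m + 1 + d - m = d + 1 by omega,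
      show m + 1 + d - (m + 1) = d by omega]
    simp only [Nat.choose_one_right, Nat.factorial_succ m]
    ring

end coveringCount

theorem card_two_subset_covering_pairs {V : Type*} [Fintype V] (m : ℕ) :
    Nat.card {p : Finset V × (Fin m → V) //
        #p.1 = 2 ∧ ∀ v : V, v ∈ p.1 ∨ ∃ k, p.2 k = v} =
      (Fintype.card V).choose 2 * coveringCount (Fintype.card V) m (Fintype.card V - 2) := by
  classical
  have hfiber (S : Finset V) :
      Nat.card {f : Fin m → V // #S = 2 ∧ ∀ v : V, v ∈ S ∨ ∃ k, f k = v} =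
        if #S = 2 then coveringCount (Fintype.card V) m (Fintype.card V - 2) else 0 := by
    split_ifs with hS
    · rw [← hS, ← card_compl, ← card_covering_eq_coveringCount]
      exact Nat.card_congr <| Equiv.subtypeEquivRight fun f ↦ by
        simp [hS, or_iff_not_imp_left]
    · simp [hS]
  rw [Nat.card_congr (Equiv.subtypeProdEquivSigmaSubtype fun (S : Finset V) (f : Fin m → V) ↦
      #S = 2 ∧ ∀ v, v ∈ S ∨ ∃ k, f k = v), Nat.card_sigma]
  simp only [hfiber, sum_ite, sum_const_zero, add_zero, sum_const, smul_eq_mul]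
  rw [← Fintype.card_subtype, Fintype.card_finset_len]

theorem choose_two_mul_coveringCount_sub_one_sub_two (n : ℕ) :
    n.choose 2 * coveringCount n (n - 1) (n - 2) = n ! * (n ^ 2 + n - 2) / 4 := by
  obtain _ | _ | m := n
  · rfl
  · rfl
  rw [show m + 2 - 1 = m + 1 by omega, show m + 2 - 2 = m by omega,
    coveringCount.succ_self (by omega), show m + 2 - m = 2 by omega,
    show (m + 2) ^ 2 + (m + 2) - 2 = (m + 1) * (m + 4) by ring_nf; omega]
  refine (Nat.div_eq_of_eq_mul_left (by norm_num) ?_).symm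
  have h₁ := Nat.add_one_mul_choose_eq (m + 1) 1
  have h₂ := Nat.add_one_mul_choose_eq m 1
  simp only [Nat.choose_one_right] at h₁ h₂
  rw [Nat.factorial_succ (m + 1), Nat.factorial_succ m]
  linear_combination
    (4 * (m + 1) * m ! + 2 * (m + 1).choose 2 * m !) * h₁ + m ! * ((m + 2) * (m + 1)) * h₂

theorem count_covering_pairs_general {V : Type*} [Fintype V]
    (n : ℕ) (h : Fintype.card V = n) :
    Nat.card {p : Finset V × (Fin (n - 1) → V) //
        p.1.card = 2 ∧ ∀ v : V, v ∈ p.1 ∨ ∃ k, p.2 k = v} =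
      n.factorial * (n ^ 2 + n - 2) / 4 := by
  rw [card_two_subset_covering_pairs, h, choose_two_mul_coveringCount_sub_one_sub_two]

/-- Combinatorial core of the 0-cell count for `r⃗ = (2,1,…,1)`: the number of
pairs `(S, f)` of a 2-subset `S ⊆ V` and a function `f` from the `n−1`
remaining colors to `V` which together cover all of `V` equals
`n!(n²+n−2)/4`. -/
theorem count_covering_pairs {V : Type*} [Fintype V] [DecidableEq V]
    (G : SimpleGraph V) (n : ℕ) (hn : 2 ≤ n) (h : Fintype.card V = n) :
    Nat.card {p : Finset V × (Fin (n - 1) → V) //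
        p.1.card = 2 ∧ ∀ v : V, v ∈ p.1 ∨ ∃ k, p.2 k = v} =
      n.factorial * (n ^ 2 + n - 2) / 4 :=
  count_covering_pairs_general n h
end
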